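/- arXiv:1205.2992 — 3 statements merged into one kernel-verified Lean document; each statement's English description precedes it below -/
import Mathlib

section
/- For every q = (x_0, …, x_k) ∈ C^k(m), let T_q = { v ∈ (ℝ^{m+1})^{k+1} : ⟨N_i(q), v⟩ = 0 for all 0 ≤ i ≤ k−1 }, let H_k be the subspace of tuples supported in the k-th component, and let E_k(q) = span{Z_0(q), …, Z_{k−1}(q)} + H_k. Then the intersection D_k(q) := T_q ∩ E_k(q) equals the span of the m+1 vectors v_r(q) = (x_k^r − x_{k−1}^r)·Y_k(q) + e_r^{(k)} (r = 1, …, m+1); these vectors are linearly independent, so D_k(q) has dimension m+1 at every q ∈ C^k(m). -/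
/-!
Let `Φ w = ⟨x_k - x_{k-1}, w⟩ • Y_k + (w in slot k)`. This is linear in `w`, `Φ e_r = v_r`, and
`Φ` is injective since the `k`-th component of `Φ w` is `w`. For `i < k` the `i`-th component of
`Φ w` is `c_i • (x_{i+1} - x_i)` with `c_i = ⟨x_k - x_{k-1}, w⟩ · A_{i+1} ⋯ A_{k-1}`. For a tuple
`v` of this shape with unit segments, `⟨N_i, v⟩ = 0` says `c_i = A_{i+1} c_{i+1}` for
`i + 1 < k` and `c_{k-1} = ⟨x_k - x_{k-1}, v_k⟩`. Hence `Φ w ∈ T_q ∩ E_k(q)`; conversely every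
`v ∈ T_q ∩ E_k(q)` has its first `k` components of that shape and solves the same backward
recurrence, so `v = Φ v_k`. Thus `D_k(q)` is the image of the injective map `Φ`.
-/

noncomputable section

open scoped RealInnerProductSpace

namespace ArticulatedArm

/-- `ℝ^{m+1}` with the Euclidean structure. -/
abbrev Vec (m : ℕ) : Type := EuclideanSpace ℝ (Fin (m + 1))

/-- `(ℝ^{m+1})^{k+1}` with the Euclidean (product) structure. -/
abbrev Tup (m k : ℕ) : Type := PiLp 2 (fun _ : Fin (k + 1) => Vec m)

open Fin.NatCast in
/-- The segment vector `x_{i+1} - x_i`. -/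
def seg (m k : ℕ) (x : Tup m k) (i : ℕ) : Vec m :=
  x ((i + 1 : ℕ) : Fin (k + 1)) - x ((i : ℕ) : Fin (k + 1))

/-- The configuration space `C^k(m)`. -/
def Conf (m k : ℕ) : Set (Tup m k) := {x | ∀ i, i < k → ‖seg m k x i‖ = 1}

/-- `A_{i,j}(x) = ⟨x_{i+1} - x_i, x_{j+1} - x_j⟩`. -/
def AA (m k : ℕ) (x : Tup m k) (i j : ℕ) : ℝ := ⟪seg m k x i, seg m k x j⟫

/-- `A_i(x) = A_{i,i-1}(x)`. -/
def Acoef (m k : ℕ) (x : Tup m k) (i : ℕ) : ℝ := AA m k x i (i - 1)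

/-- `Z_i(x)`: the tuple whose `i`-th component is `x_{i+1} - x_i` and the others `0`. -/
def Zt (m k : ℕ) (x : Tup m k) (i : ℕ) : Tup m k :=
  WithLp.toLp 2 (fun l => if (l : ℕ) = i then seg m k x i else 0)

/-- `N_i(x)`: the tuple with `i`-th component `-(x_{i+1} - x_i)`, `(i+1)`-th component
`x_{i+1} - x_i`, and the others `0`. -/
def Nt (m k : ℕ) (x : Tup m k) (i : ℕ) : Tup m k :=
  WithLp.toLp 2 (fun l => if (l : ℕ) = i then -(seg m k x i)
    else if (l : ℕ) = i + 1 then seg m k x i else 0)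

/-- `Y_n(x) = Σ_{i=0}^{n-1} (Π_{j=i+1}^{n-1} A_j(x)) Z_i(x)`. -/
def Yt (m k : ℕ) (x : Tup m k) (n : ℕ) : Tup m k :=
  ∑ i ∈ Finset.range n, (∏ j ∈ Finset.Ico (i + 1) n, Acoef m k x j) • Zt m k x i

/-- `Ψ_i(x) = ‖x_{i+1} - x_i‖² - 1`. -/
def Psi (m k : ℕ) (i : ℕ) (x : Tup m k) : ℝ := ‖seg m k x i‖ ^ 2 - 1

/-- `e_r^{(i)}`: the tuple whose `i`-th component is the `r`-th standard basis
vector of `ℝ^{m+1}` and whose other components are `0`. -/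
def et (m k : ℕ) (i : ℕ) (r : Fin (m + 1)) : Tup m k :=
  WithLp.toLp 2 (fun l => if (l : ℕ) = i then EuclideanSpace.single r (1 : ℝ) else 0)

open Finset

theorem _root_.PiLp.inner_single_left {𝕜 ι : Type*} [RCLike 𝕜] [Fintype ι] [DecidableEq ι]
    {β : ι → Type*} [∀ i, NormedAddCommGroup (β i)] [∀ i, InnerProductSpace 𝕜 (β i)]
    (i : ι) (a : β i) (v : PiLp 2 β) :
    inner 𝕜 (PiLp.single 2 i a) v = inner 𝕜 a (v i) := by
  rw [PiLp.inner_apply, sum_eq_single i (fun j _ hj => by simp [hj]) (by simp),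
    PiLp.single_eq_same]

theorem eq_mul_prod_Ico_of_backward_rec {M : Type*} [CommMonoid M] {a f : ℕ → M} {k : ℕ}
    {c : M} (hlast : ∀ i, i + 1 = k → f i = c)
    (hrec : ∀ i, i + 1 < k → f i = a (i + 1) * f (i + 1)) :
    ∀ i < k, f i = c * ∏ j ∈ Ico (i + 1) k, a j := by
  intro i hi
  obtain ⟨d, hd⟩ : ∃ d, k = i + 1 + d := ⟨k - (i + 1), by omega⟩
  induction d generalizing i with
  | zero => rw [hlast i hd.symm, hd, add_zero, Ico_self, prod_empty, mul_one]
  | succ d ih =>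
    rw [hrec i (by omega), ih (i + 1) (by omega) (by omega),
      prod_eq_prod_Ico_succ_bot (by omega : i + 1 < k), mul_left_comm]

section

variable {m k : ℕ} {q : Tup m k}

open Fin.NatCast

/-- `E_k(q)`. -/
def segmentSpan (q : Tup m k) : Submodule ℝ (Tup m k) :=
  Submodule.span ℝ ((Set.range fun i : Fin k => Zt m k q i) ∪
    {v | ∀ l : Fin (k + 1), (l : ℕ) ≠ k → v l = 0})

lemma Yt_apply (q : Tup m k) (n : ℕ) (l : Fin (k + 1)) :
    Yt m k q n l = if (l : ℕ) < n then
      (∏ j ∈ Ico ((l : ℕ) + 1) n, Acoef m k q j) • seg m k q l else 0 := by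
  simp [Yt, Zt, Finset.sum_apply]

lemma Nt_eq (q : Tup m k) {i : ℕ} (hi : i < k) :
    Nt m k q i = PiLp.single 2 ((i + 1 : ℕ) : Fin (k + 1)) (seg m k q i)
      - PiLp.single 2 (i : Fin (k + 1)) (seg m k q i) := by
  ext l : 1
  have h₀ : ((i : Fin (k + 1)) : ℕ) = i := Fin.val_cast_of_lt (by omega)
  have h₁ : (((i + 1 : ℕ) : Fin (k + 1)) : ℕ) = i + 1 := Fin.val_cast_of_lt (by omega)
  simp only [Nt, PiLp.toLp_apply, PiLp.sub_apply, ← PiLp.toLp_single, Pi.single_apply,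
    Fin.ext_iff, h₀, h₁]
  split_ifs <;> first | omega | simp

lemma inner_Nt (q v : Tup m k) {i : ℕ} (hi : i < k) :
    ⟪Nt m k q i, v⟫ =
      ⟪seg m k q i, v ((i + 1 : ℕ) : Fin (k + 1))⟫ - ⟪seg m k q i, v i⟫ := by
  rw [Nt_eq q hi, inner_sub_left, PiLp.inner_single_left, PiLp.inner_single_left]

lemma et_eq_single (r : Fin (m + 1)) :
    et m k k r = PiLp.single 2 (Fin.last k) (EuclideanSpace.single r 1) := by
  ext l : 1
  simp [et, Fin.ext_iff]

lemma natCast_succ_eq_last {i : ℕ} (h : i + 1 = k) :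
    ((i + 1 : ℕ) : Fin (k + 1)) = Fin.last k := by
  subst h
  exact Fin.natCast_eq_last _

lemma inner_seg_self (hq : q ∈ Conf m k) {i : ℕ} (hi : i < k) :
    ⟪seg m k q i, seg m k q i⟫ = 1 := by
  rw [real_inner_self_eq_norm_sq, hq i hi, one_pow]

lemma inner_seg_seg_succ (q : Tup m k) (i : ℕ) :
    ⟪seg m k q i, seg m k q (i + 1)⟫ = Acoef m k q (i + 1) := by
  rw [Acoef, AA, Nat.add_sub_cancel, real_inner_comm]

/-- The map `Φ`, with `Φ w = Σ_r w_r • v_r(q)`. -/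
def endpointLift (q : Tup m k) : Vec m →ₗ[ℝ] Tup m k where
  toFun w := ⟪seg m k q (k - 1), w⟫ • Yt m k q k + PiLp.single 2 (Fin.last k) w
  map_add' w w' := by rw [inner_add_right, add_smul, PiLp.single_add]; abel
  map_smul' c w := by
    rw [real_inner_smul_right, mul_smul, smul_add, RingHom.id_apply, ← PiLp.toLp_single,
      ← PiLp.toLp_single, Pi.single_smul', WithLp.toLp_smul]

lemma endpointLift_apply (q : Tup m k) (w : Vec m) :
    endpointLift q w =
      ⟪seg m k q (k - 1), w⟫ • Yt m k q k + PiLp.single 2 (Fin.last k) w := rfl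

@[simp]
lemma endpointLift_apply_last (q : Tup m k) (w : Vec m) : endpointLift q w (Fin.last k) = w := by
  simp [endpointLift_apply, Yt_apply]

lemma endpointLift_apply_of_lt (q : Tup m k) (w : Vec m) {i : ℕ} (hi : i < k) :
    endpointLift q w i =
      (⟪seg m k q (k - 1), w⟫ * ∏ j ∈ Ico (i + 1) k, Acoef m k q j) • seg m k q i := by
  have h₀ : ((i : Fin (k + 1)) : ℕ) = i := Fin.val_cast_of_lt (by omega)
  have hne : (i : Fin (k + 1)) ≠ Fin.last k := by simp [Fin.ext_iff, h₀]; omega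
  simp [endpointLift_apply, Yt_apply, h₀, hi, hne, mul_smul]

lemma inner_Nt_endpointLift (hq : q ∈ Conf m k) (w : Vec m) {i : ℕ} (hi : i < k) :
    ⟪Nt m k q i, endpointLift q w⟫ = 0 := by
  rw [inner_Nt q _ hi, endpointLift_apply_of_lt q w hi, real_inner_smul_right,
    inner_seg_self hq hi]
  rcases (show i + 1 < k ∨ i + 1 = k by omega) with hlt | hlast
  · rw [endpointLift_apply_of_lt q w hlt, real_inner_smul_right, inner_seg_seg_succ,
      prod_eq_prod_Ico_succ_bot hlt]
    ring
  · rw [natCast_succ_eq_last hlast, endpointLift_apply_last, hlast, Ico_self,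
      prod_empty, show k - 1 = i by omega]
    ring

def alongSegments (q : Tup m k) : Submodule ℝ (Tup m k) :=
  ⨅ (i : ℕ) (_ : i < k),
    (ℝ ∙ seg m k q i).comap (PiLp.projₗ 2 (fun _ => Vec m) (i : Fin (k + 1)))

lemma mem_alongSegments {v : Tup m k} :
    v ∈ alongSegments q ↔ ∀ i < k, v i ∈ ℝ ∙ seg m k q i := by
  simp [alongSegments]

lemma eq_endpointLift_of_mem (hq : q ∈ Conf m k) {v : Tup m k}
    (hT : ∀ i < k, ⟪Nt m k q i, v⟫ = 0) (hS : v ∈ alongSegments q) :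
    v = endpointLift q (v (Fin.last k)) := by
  have hv : ∀ i < k, v i = ⟪seg m k q i, v i⟫ • seg m k q i := by
    intro i hi
    obtain ⟨c, hc⟩ := Submodule.mem_span_singleton.mp (mem_alongSegments.mp hS i hi)
    rw [← hc, real_inner_smul_right, inner_seg_self hq hi, mul_one]
  have hcoef := eq_mul_prod_Ico_of_backward_rec (f := fun i => ⟪seg m k q i, v i⟫)
    (a := Acoef m k q) (c := ⟪seg m k q (k - 1), v (Fin.last k)⟫)
    (fun i (hi : i + 1 = k) => by
      have h := hT i (by omega)
      rw [inner_Nt q v (by omega), natCast_succ_eq_last hi] at h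
      rw [show k - 1 = i by omega]
      linarith)
    (fun i (hi : i + 1 < k) => by
      have h := hT i (by omega)
      rw [inner_Nt q v (by omega), hv (i + 1) hi, real_inner_smul_right,
        inner_seg_seg_succ] at h
      linarith)
  ext l : 1
  by_cases hl : (l : ℕ) < k
  · rw [← Fin.cast_val_eq_self l, endpointLift_apply_of_lt q _ hl, ← hcoef _ hl]
    exact hv _ hl
  · rw [Fin.eq_last_of_not_lt hl, endpointLift_apply_last]

lemma segmentSpan_le_alongSegments (q : Tup m k) : segmentSpan q ≤ alongSegments q := by
  rw [segmentSpan, Submodule.span_le]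
  rintro v (⟨j, rfl⟩ | hv) <;> rw [SetLike.mem_coe, mem_alongSegments] <;> intro i hi
  · have h₀ : ((i : Fin (k + 1)) : ℕ) = i := Fin.val_cast_of_lt (by omega)
    by_cases hij : i = j
    · simp [Zt, hij, Submodule.mem_span_singleton_self]
    · simp [Zt, h₀, hij]
  · rw [hv _ (by rw [Fin.val_cast_of_lt (by omega)]; omega)]
    exact zero_mem _

lemma endpointLift_mem_segmentSpan (q : Tup m k) (w : Vec m) :
    endpointLift q w ∈ segmentSpan q := by
  refine add_mem (Submodule.smul_mem _ _ (sum_mem fun i hi => ?_))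
    (Submodule.subset_span (Or.inr fun l hl => PiLp.single_eq_of_ne _ ?_ _))
  · exact Submodule.smul_mem _ _ (Submodule.subset_span (Or.inl ⟨⟨i, mem_range.mp hi⟩, rfl⟩))
  · rintro rfl
    simp at hl

lemma endpointLift_single (q : Tup m k) (r : Fin (m + 1)) :
    endpointLift q (EuclideanSpace.single r 1) =
      seg m k q (k - 1) r • Yt m k q k + et m k k r := by
  rw [endpointLift_apply, EuclideanSpace.inner_single_right, et_eq_single]
  simp

lemma endpointLift_injective (q : Tup m k) : Function.Injective (endpointLift q) :=
  fun w w' h => by simpa using congrArg (· (Fin.last k)) h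

end

theorem statement3_general (m k : ℕ) (q : Tup m k) (hq : q ∈ Conf m k) :
    let Tq : Set (Tup m k) := {v | ∀ i, i < k → ⟪Nt m k q i, v⟫ = 0}
    let Hk : Set (Tup m k) := {v | ∀ l : Fin (k + 1), (l : ℕ) ≠ k → v l = 0}
    let Ek : Submodule ℝ (Tup m k) :=
      Submodule.span ℝ ((Set.range fun i : Fin k => Zt m k q (i : ℕ)) ∪ Hk)
    let vr : Fin (m + 1) → Tup m k :=
      fun r => (seg m k q (k - 1) r) • Yt m k q k + et m k k r
    Tq ∩ (Ek : Set (Tup m k)) = (Submodule.span ℝ (Set.range vr) : Set (Tup m k)) ∧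
    LinearIndependent ℝ vr ∧
    Module.finrank ℝ ↥(Submodule.span ℝ (Set.range vr)) = m + 1 := by
  intro Tq Hk Ek vr
  set e := PiLp.basisFun 2 ℝ (Fin (m + 1))
  have hvr : vr = endpointLift q ∘ e :=
    funext fun r => by rw [Function.comp_apply, PiLp.basisFun_apply, endpointLift_single]
  have hspan : Submodule.span ℝ (Set.range vr) = LinearMap.range (endpointLift q) := by
    rw [hvr, Set.range_comp, Submodule.span_image, e.span_eq, LinearMap.range_eq_map]
  have hli : LinearIndependent ℝ vr := hvr ▸ e.linearIndependent.map' (endpointLift q)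
    (LinearMap.ker_eq_bot.mpr (endpointLift_injective q))
  refine ⟨?_, hli, (finrank_span_eq_card hli).trans (Fintype.card_fin _)⟩
  rw [hspan]
  ext v
  constructor
  · rintro ⟨hT, hE⟩
    exact ⟨v (Fin.last k),
      (eq_endpointLift_of_mem hq hT (segmentSpan_le_alongSegments q hE)).symm⟩
  · rintro ⟨w, rfl⟩
    exact ⟨fun i hi => inner_Nt_endpointLift hq w hi, endpointLift_mem_segmentSpan q w⟩

/-- at every `q ∈ C^k(m)`, the intersection `D_k(q) = T_q ∩ E_k(q)` equals the
span of the `m+1` vectors `v_r(q) = (x_k^r - x_{k-1}^r)·Y_k(q) + e_r^{(k)}`; these vectors are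
linearly independent, so `D_k(q)` has dimension `m+1`. -/
theorem statement3 (m k : ℕ) (hm : 2 ≤ m) (hk : 1 ≤ k)
    (q : Tup m k) (hq : q ∈ Conf m k) :
    let Tq : Set (Tup m k) := {v | ∀ i, i < k → ⟪Nt m k q i, v⟫ = 0}
    let Hk : Set (Tup m k) := {v | ∀ l : Fin (k + 1), (l : ℕ) ≠ k → v l = 0}
    let Ek : Submodule ℝ (Tup m k) :=
      Submodule.span ℝ ((Set.range fun i : Fin k => Zt m k q (i : ℕ)) ∪ Hk)
    let vr : Fin (m + 1) → Tup m k :=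
      fun r => (seg m k q (k - 1) r) • Yt m k q k + et m k k r
    Tq ∩ (Ek : Set (Tup m k)) = (Submodule.span ℝ (Set.range vr) : Set (Tup m k)) ∧
    LinearIndependent ℝ vr ∧
    Module.finrank ℝ ↥(Submodule.span ℝ (Set.range vr)) = m + 1 :=
  statement3_general m k q hq

end ArticulatedArm
end
end

section
/- The set of Cartan points { q ∈ C^k(m) : A_l(q) ≠ 0 for every l = 1, …, k−1 } is open and dense in C^k(m) (with the subspace topology). Equivalently, the singular set C_S = { q ∈ C^k(m) : A_l(q) = 0 for some 1 ≤ l ≤ k−1 } is closed in C^k(m) and has empty interior in C^k(m). -/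
/-!
Each condition `A_l ≠ 0` cuts out an open subset of `C^k(m)`, by continuity. It is also dense:
at a point with `A_l = 0` the unit segments `x_{l+1} - x_l` and `x_l - x_{l-1}` are orthogonal,
so rotating the former towards the latter by a small angle `t`, while translating
`x_{l+1}, …, x_k` along with it, stays in `C^k(m)`, leaves every other segment unchanged and
makes `A_l = sin t ≠ 0`. A finite intersection of open dense sets is open and dense, and the
singular set is its complement.
-/

noncomputable section

open scoped RealInnerProductSpace

namespace ArticulatedArm

open Filter Topology

theorem dense_biInter_finset_of_isOpen {X ι : Type*} [TopologicalSpace X] {s : Finset ι}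
    {f : ι → Set X} (ho : ∀ i ∈ s, IsOpen (f i)) (hd : ∀ i ∈ s, Dense (f i)) :
    Dense (⋂ i ∈ s, f i) := by
  classical
  induction s using Finset.induction_on with
  | empty => simp
  | insert a s _ ih =>
    simp only [Finset.mem_insert, forall_eq_or_imp] at ho hd
    rw [Finset.set_biInter_insert]
    exact hd.1.inter_of_isOpen_left (ih ho.2 hd.2) ho.1

section Rotation

variable {E : Type*} [NormedAddCommGroup E] [InnerProductSpace ℝ E]

theorem norm_cos_smul_add_sin_smul {s v : E} (hs : ‖s‖ = 1) (hv : ‖v‖ = 1) (hsv : ⟪s, v⟫ = 0)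
    (t : ℝ) : ‖Real.cos t • s + Real.sin t • v‖ = 1 := by
  have hsq : ‖Real.cos t • s + Real.sin t • v‖ ^ 2 = 1 := by
    rw [norm_add_sq_real, inner_smul_left, inner_smul_right, hsv, norm_smul, norm_smul, hs, hv]
    simp [Real.cos_sq_add_sin_sq]
  exact (pow_eq_one_iff_of_nonneg (norm_nonneg _) two_ne_zero).1 hsq

theorem inner_cos_smul_add_sin_smul {s v : E} (hv : ‖v‖ = 1) (hsv : ⟪s, v⟫ = 0) (t : ℝ) :
    ⟪Real.cos t • s + Real.sin t • v, v⟫ = Real.sin t := by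
  rw [inner_add_left, inner_smul_left, inner_smul_left, hsv, real_inner_self_eq_norm_sq, hv]
  simp

end Rotation

variable {m k : ℕ}

theorem continuous_seg (i : ℕ) : Continuous fun x : Tup m k => seg m k x i :=
  (PiLp.continuous_apply 2 _ _).sub (PiLp.continuous_apply 2 _ _)

theorem continuous_Acoef (l : ℕ) : Continuous fun x : Tup m k => Acoef m k x l :=
  (continuous_seg l).inner (continuous_seg (l - 1))

def setSeg (x : Tup m k) (l : ℕ) (u : Vec m) : Tup m k :=
  WithLp.toLp 2 fun j => if l < (j : ℕ) then x j + (u - seg m k x l) else x j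

theorem continuous_setSeg (x : Tup m k) (l : ℕ) : Continuous (setSeg x l) := by
  refine (PiLp.continuous_toLp 2 _).comp (continuous_pi fun j => ?_)
  split_ifs <;> fun_prop

theorem setSeg_seg_self (x : Tup m k) (l : ℕ) : setSeg x l (seg m k x l) = x := by
  ext j : 1
  simp [setSeg]

open Fin.NatCast in
theorem seg_setSeg (x : Tup m k) (l : ℕ) (u : Vec m) {i : ℕ} (hi : i < k) :
    seg m k (setSeg x l u) i = if i = l then u else seg m k x i := by
  have h1 : (((i + 1 : ℕ) : Fin (k + 1)) : ℕ) = i + 1 := Fin.val_cast_of_lt (by omega)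
  have h0 : (((i : ℕ) : Fin (k + 1)) : ℕ) = i := Fin.val_cast_of_lt (by omega)
  simp only [seg, setSeg, h1, h0]
  split_ifs <;> (try subst_vars) <;> first | omega | abel

theorem setSeg_mem_Conf {x : Tup m k} (hx : x ∈ Conf m k) (l : ℕ) {u : Vec m} (hu : ‖u‖ = 1) :
    setSeg x l u ∈ Conf m k := by
  intro i hi
  rw [seg_setSeg x l u hi]
  split_ifs
  exacts [hu, hx i hi]

theorem Acoef_setSeg (x : Tup m k) {l : ℕ} (hl : 1 ≤ l) (hlk : l < k) (u : Vec m) :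
    Acoef m k (setSeg x l u) l = ⟪u, seg m k x (l - 1)⟫ := by
  simp [Acoef, AA, seg_setSeg x l u hlk, seg_setSeg x l u (by omega : l - 1 < k),
    show l - 1 ≠ l by omega]

theorem isOpen_Acoef_ne_zero (l : ℕ) : IsOpen {q : Conf m k | Acoef m k (q : Tup m k) l ≠ 0} :=
  isOpen_ne_fun ((continuous_Acoef l).comp continuous_subtype_val) continuous_const

theorem dense_Acoef_ne_zero {l : ℕ} (hl : 1 ≤ l) (hlk : l < k) :
    Dense {q : Conf m k | Acoef m k (q : Tup m k) l ≠ 0} := by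
  refine dense_iff_closure_eq.2 (Set.eq_univ_of_forall fun q => ?_)
  by_cases hq : Acoef m k (q : Tup m k) l ≠ 0
  · exact subset_closure hq
  set s := seg m k q l
  set v := seg m k q (l - 1)
  have hs : ‖s‖ = 1 := q.2 l hlk
  have hv : ‖v‖ = 1 := q.2 (l - 1) (by omega)
  have hsv : ⟪s, v⟫ = 0 := not_not.1 hq
  let γ : ℝ → Conf m k := fun t => ⟨setSeg q l (Real.cos t • s + Real.sin t • v),
    setSeg_mem_Conf q.2 l (norm_cos_smul_add_sin_smul hs hv hsv t)⟩
  have hγ : Continuous γ := ((continuous_setSeg _ _).comp (by fun_prop)).subtype_mk _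
  have hγ0 : γ 0 = q := Subtype.ext (by simp [γ, s, setSeg_seg_self])
  have hlim : Tendsto γ (𝓝[>] 0) (𝓝 q) :=
    hγ0 ▸ hγ.continuousAt.tendsto.mono_left nhdsWithin_le_nhds
  refine mem_closure_of_tendsto hlim ?_
  filter_upwards [Ioo_mem_nhdsGT Real.pi_pos] with t ht
  change Acoef m k (setSeg q l _) l ≠ 0
  rw [Acoef_setSeg _ hl hlk, inner_cos_smul_add_sin_smul hv hsv]
  exact (Real.sin_pos_of_pos_of_lt_pi ht.1 ht.2).ne'

theorem statement7_general (m k : ℕ) :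
    IsOpen {q : ↥(Conf m k) | ∀ l, 1 ≤ l → l ≤ k - 1 → Acoef m k (q : Tup m k) l ≠ 0} ∧
    Dense {q : ↥(Conf m k) | ∀ l, 1 ≤ l → l ≤ k - 1 → Acoef m k (q : Tup m k) l ≠ 0} ∧
    IsClosed {q : ↥(Conf m k) | ∃ l, 1 ≤ l ∧ l ≤ k - 1 ∧ Acoef m k (q : Tup m k) l = 0} ∧
    interior {q : ↥(Conf m k) | ∃ l, 1 ≤ l ∧ l ≤ k - 1 ∧ Acoef m k (q : Tup m k) l = 0}
      = ∅ := by
  set cartan := {q : ↥(Conf m k) | ∀ l, 1 ≤ l → l ≤ k - 1 → Acoef m k (q : Tup m k) l ≠ 0}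
  have hcartan : cartan = ⋂ l ∈ Finset.Icc 1 (k - 1),
      {q : Conf m k | Acoef m k (q : Tup m k) l ≠ 0} := by
    ext q
    simp [cartan]
  have hopen : IsOpen cartan :=
    hcartan ▸ isOpen_biInter_finset fun l _ => isOpen_Acoef_ne_zero l
  have hdense : Dense cartan := hcartan ▸ dense_biInter_finset_of_isOpen
    (fun l _ => isOpen_Acoef_ne_zero l)
    (fun l hl => dense_Acoef_ne_zero (Finset.mem_Icc.1 hl).1 (by grind))
  have hsingular : {q : ↥(Conf m k) | ∃ l, 1 ≤ l ∧ l ≤ k - 1 ∧ Acoef m k (q : Tup m k) l = 0}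
      = cartanᶜ := by
    ext q
    simp [cartan]
  exact ⟨hopen, hdense, hsingular ▸ hopen.isClosed_compl, hsingular ▸ hdense.interior_compl⟩

/-- the set of Cartan points is open and dense in `C^k(m)`; equivalently the
singular set `C_S` is closed in `C^k(m)` and has empty interior. -/
theorem statement7 (m k : ℕ) (hm : 2 ≤ m) (hk : 2 ≤ k) :
    IsOpen {q : ↥(Conf m k) | ∀ l, 1 ≤ l → l ≤ k - 1 → Acoef m k (q : Tup m k) l ≠ 0} ∧
    Dense {q : ↥(Conf m k) | ∀ l, 1 ≤ l → l ≤ k - 1 → Acoef m k (q : Tup m k) l ≠ 0} ∧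
    IsClosed {q : ↥(Conf m k) | ∃ l, 1 ≤ l ∧ l ≤ k - 1 ∧ Acoef m k (q : Tup m k) l = 0} ∧
    interior {q : ↥(Conf m k) | ∃ l, 1 ≤ l ∧ l ≤ k - 1 ∧ Acoef m k (q : Tup m k) l = 0}
      = ∅ :=
  statement7_general m k

end ArticulatedArm
end
end

section
/- Let L be a subset of {2, …, k} of cardinality r. At every point q ∈ C^k(m) satisfying A_{l−1}(q) = 0 for all l ∈ L, the map Φ : (ℝ^{m+1})^{k+1} → ℝ^{k+r} whose components are Ψ_0, …, Ψ_{k−1} together with the functions A_{l−1} for l ∈ L has surjective Fréchet derivative at q. (This expresses that the set C(ω) = { q ∈ C^k(m) : A_{l−1}(q) = 0 for l ∈ L and A_{l−1}(q) ≠ 0 for l ∈ {2,…,k} \ L } is an analytic submanifold of C^k(m) of codimension r.) -/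
noncomputable section

open scoped RealInnerProductSpace

namespace ArticulatedArm

/-!
Both `Ψ_i` and `A_i` are inner products of segment vectors `s_i = x_{i+1} - x_i`, so the
derivative at `q` depends on a tangent vector `v` only through its segments `u_i = v_{i+1} - v_i`,
and every family `(u_i)_{i<k}` is realised by partial sums. It remains to solve, for `u`,
`2⟨s_i, u_i⟩ = a_i` and `⟨s_{l-2}, u_{l-1}⟩ + ⟨s_{l-1}, u_{l-2}⟩ = b_l` for `l ∈ L`. Take
`u_i = (a_i / 2) s_i + w_i` with `w_i ⊥ s_i`; since `s_{l-2} ⊥ s_{l-1}` for `l ∈ L`, the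
correction `w_{l-1}` can be chosen along the unit vector `s_{l-2}`, and the equations are then
solved from left to right.
-/

section IncrementSystem

variable {E : Type*} [NormedAddCommGroup E] [InnerProductSpace ℝ E]

/-- For `t ∈ T`, `w_{t+1}` is the multiple of `s_t` that makes the `t`-th mixed equation
hold. -/
def correction (s : ℕ → E) (T : Set ℕ) [DecidablePred (· ∈ T)] (b : ℕ → ℝ) : ℕ → E
  | 0 => 0
  | t + 1 => if t ∈ T then (b t - ⟪s (t + 1), correction s T b t⟫) • s t else 0

lemma inner_correction_eq_zero (s : ℕ → E) (T : Set ℕ) [DecidablePred (· ∈ T)] (b : ℕ → ℝ)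
    (horth : ∀ t ∈ T, ⟪s (t + 1), s t⟫ = 0) (i : ℕ) :
    ⟪s i, correction s T b i⟫ = 0 := by
  cases i with
  | zero => simp [correction]
  | succ t =>
    rw [correction]
    split_ifs with ht
    · rw [real_inner_smul_right, horth t ht, mul_zero]
    · exact inner_zero_right _

lemma exists_two_inner_eq_and_inner_add_inner_eq (s : ℕ → E) (k : ℕ) (T : Set ℕ)
    (hunit : ∀ i < k, ‖s i‖ = 1) (hT : ∀ t ∈ T, t < k)
    (horth : ∀ t ∈ T, ⟪s (t + 1), s t⟫ = 0) (a b : ℕ → ℝ) :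
    ∃ u : ℕ → E, (∀ i < k, 2 * ⟪s i, u i⟫ = a i) ∧
      ∀ t ∈ T, ⟪s t, u (t + 1)⟫ + ⟪s (t + 1), u t⟫ = b t := by
  classical
  set w := correction s T b
  have hw : ∀ i, ⟪s i, w i⟫ = 0 := inner_correction_eq_zero s T b horth
  have hself : ∀ i < k, ⟪s i, s i⟫ = 1 := fun i hi => by
    rw [real_inner_self_eq_norm_sq, hunit i hi, one_pow]
  refine ⟨fun i => (a i / 2) • s i + w i, fun i hi => ?_, fun t ht => ?_⟩
  · rw [inner_add_right, real_inner_smul_right, hw, hself i hi]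
    ring
  · have hwt : w (t + 1) = (b t - ⟪s (t + 1), w t⟫) • s t := if_pos ht
    have horth' : ⟪s t, s (t + 1)⟫ = 0 := by rw [real_inner_comm]; exact horth t ht
    simp only [inner_add_right, real_inner_smul_right, hwt, horth t ht, horth',
      hself t (hT t ht)]
    ring

end IncrementSystem

open Fin.NatCast

lemma exists_seg_eq (m k : ℕ) (u : ℕ → Vec m) : ∃ v : Tup m k, ∀ i < k, seg m k v i = u i := by
  refine ⟨WithLp.toLp 2 fun l => ∑ j ∈ Finset.range l, u j, fun i hi => ?_⟩
  have h1 : (((i + 1 : ℕ)) : Fin (k + 1)).val = i + 1 := Fin.val_cast_of_lt (by omega)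
  have h0 : ((i : ℕ) : Fin (k + 1)).val = i := Fin.val_cast_of_lt (by omega)
  simp only [seg, h1, h0, Finset.sum_range_succ, add_sub_cancel_left]

def segL (m k i : ℕ) : Tup m k →L[ℝ] Vec m :=
  PiLp.proj (𝕜 := ℝ) 2 (fun _ : Fin (k + 1) => Vec m) ((i + 1 : ℕ) : Fin (k + 1)) -
    PiLp.proj (𝕜 := ℝ) 2 (fun _ : Fin (k + 1) => Vec m) ((i : ℕ) : Fin (k + 1))

def dAA (m k : ℕ) (q : Tup m k) (i j : ℕ) : Tup m k →L[ℝ] ℝ :=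
  (innerSL ℝ (seg m k q j)).comp (segL m k i) + (innerSL ℝ (seg m k q i)).comp (segL m k j)

lemma dAA_apply (m k : ℕ) (q : Tup m k) (i j : ℕ) (v : Tup m k) :
    dAA m k q i j v = ⟪seg m k q j, seg m k v i⟫ + ⟪seg m k q i, seg m k v j⟫ := rfl

lemma hasFDerivAt_AA (m k i j : ℕ) (q : Tup m k) :
    HasFDerivAt (fun x => AA m k x i j) (dAA m k q i j) q := by
  refine ((segL m k i).hasFDerivAt.inner ℝ (segL m k j).hasFDerivAt).congr_fderiv ?_
  ext v
  simp only [dAA_apply, ContinuousLinearMap.coe_comp, Function.comp_apply,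
    fderivInnerCLM_apply, ContinuousLinearMap.prod_apply]
  rw [real_inner_comm (segL m k j q), add_comm]
  rfl

lemma hasFDerivAt_Psi (m k i : ℕ) (q : Tup m k) :
    HasFDerivAt (Psi m k i) (dAA m k q i i) q := by
  have hPsi : Psi m k i = fun x => AA m k x i i - 1 := by
    funext x
    rw [Psi, AA, real_inner_self_eq_norm_sq]
  rw [hPsi]
  exact (hasFDerivAt_AA m k i i q).sub_const 1

lemma hasFDerivAt_Acoef (m k i : ℕ) (q : Tup m k) :
    HasFDerivAt (fun x => Acoef m k x i) (dAA m k q i (i - 1)) q :=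
  hasFDerivAt_AA m k i (i - 1) q

theorem statement8_general (m k : ℕ)
    (L : Finset ℕ) (hL : ↑L ⊆ Set.Icc 2 k)
    (q : Tup m k) (hq : q ∈ Conf m k) (hA : ∀ l ∈ L, Acoef m k q (l - 1) = 0) :
    ∃ D : Tup m k →L[ℝ] ((Fin k → ℝ) × (↥L → ℝ)),
      HasFDerivAt (fun x : Tup m k =>
        ((fun i : Fin k => Psi m k (i : ℕ) x),
         (fun l : ↥L => Acoef m k x ((l : ℕ) - 1)))) D q ∧
      Function.Surjective D := by
  refine ⟨(ContinuousLinearMap.pi fun i : Fin k => dAA m k q i i).prod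
      (ContinuousLinearMap.pi fun l : ↥L => dAA m k q (l - 1) (l - 1 - 1)),
    (hasFDerivAt_pi.2 fun i : Fin k => hasFDerivAt_Psi m k i q).prodMk
      (hasFDerivAt_pi.2 fun l : ↥L => hasFDerivAt_Acoef m k (l - 1) q), ?_⟩
  rintro ⟨a, b⟩
  obtain ⟨u, hua, hub⟩ := exists_two_inner_eq_and_inner_add_inner_eq (seg m k q) k
    {t | t + 2 ∈ L} hq (fun t ht => by have := (hL (Finset.mem_coe.2 ht)).2; omega)
    (fun t ht => by simpa [Acoef, AA] using hA (t + 2) ht)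
    (fun i => if h : i < k then a ⟨i, h⟩ else 0)
    (fun t => if h : t + 2 ∈ L then b ⟨t + 2, h⟩ else 0)
  obtain ⟨v, hv⟩ := exists_seg_eq m k u
  refine ⟨v, Prod.ext (funext fun i => ?_) (funext fun ⟨l, hl⟩ => ?_)⟩
  · change dAA m k q i i v = a i
    rw [dAA_apply, hv i i.isLt, ← two_mul]
    exact (hua i i.isLt).trans (dif_pos i.isLt)
  · obtain ⟨t, rfl⟩ : ∃ t, l = t + 2 := ⟨l - 2, by have := (hL hl).1; omega⟩
    have hlk : t + 2 ≤ k := (hL hl).2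
    change dAA m k q (t + 1) t v = b ⟨t + 2, hl⟩
    rw [dAA_apply, hv t (by omega), hv (t + 1) (by omega)]
    exact (hub t hl).trans (dif_pos hl)

/-- for `L ⊆ {2,…,k}` of cardinality `r`, at every `q ∈ C^k(m)` with
`A_{l-1}(q) = 0` for all `l ∈ L`, the map whose components are `Ψ_0,…,Ψ_{k-1}` together with
the `A_{l-1}`, `l ∈ L`, has surjective Fréchet derivative at `q`. -/
theorem statement8 (m k r : ℕ) (hm : 2 ≤ m) (hk : 2 ≤ k)
    (L : Finset ℕ) (hL : ↑L ⊆ Set.Icc 2 k) (hcard : L.card = r)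
    (q : Tup m k) (hq : q ∈ Conf m k) (hA : ∀ l ∈ L, Acoef m k q (l - 1) = 0) :
    ∃ D : Tup m k →L[ℝ] ((Fin k → ℝ) × (↥L → ℝ)),
      HasFDerivAt (fun x : Tup m k =>
        ((fun i : Fin k => Psi m k (i : ℕ) x),
         (fun l : ↥L => Acoef m k x ((l : ℕ) - 1)))) D q ∧
      Function.Surjective D :=
  statement8_general m k L hL q hq hA

end ArticulatedArm
end
end
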